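/- Let Q_s and Q_t be i.i.d. N(0, Σ) with Σ = ΓΓᵀ + AAᵀ positive definite, and let M = ΓΓᵀ. Then E[(Q_sᵀ M Q_t)²/(‖Q_s‖²‖Q_t‖²)] ≤ tr(Σ^{1/2}MΣMΣ^{1/2}) / (λ_min(Σ)² N²) and in particular is O(tr(ΓᵀΣΓΓᵀΣΓ)/tr(Σ)²) when all eigenvalues of Σ are of the same order. -/

import Mathlib

/-!
Write `Q = S g` with `g` standard Gaussian, so that the integrand is
`(gᵀ B h)² / (gᵀ Σ g · hᵀ Σ h)` with `B = S M S`. Bounding both quadratic forms below by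
`λ_min(Σ) ‖·‖²` reduces the claim to `E[(gᵀ B h)² / (‖g‖² ‖h‖²)] = ‖B‖_F² / N²`. Expanding the
square, this expectation is a sum of products `E[gᵢ gₖ / ‖g‖²] · E[hⱼ hₗ / ‖h‖²]`, and
`E[g gᵀ / ‖g‖²] = I / N` holds for any i.i.d. symmetric coordinates without an atom at `0`:
flipping the sign of one coordinate kills the off-diagonal entries, permuting coordinates makes
the diagonal constant, and the trace is `1`. Finally `‖B‖_F² = tr(B Bᵀ) = tr(S M Σ M S)`.
-/

open MeasureTheory ProbabilityTheory Matrix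

open scoped MatrixOrder in
lemma Matrix.IsHermitian.mul_dotProduct_self_le {n : Type*} [Fintype n] [DecidableEq n]
    {A : Matrix n n ℝ} (hA : A.IsHermitian) {c : ℝ} (hc : ∀ i, c ≤ hA.eigenvalues i)
    (x : n → ℝ) : c * (x ⬝ᵥ x) ≤ x ⬝ᵥ A *ᵥ x := by
  have hle : algebraMap ℝ (Matrix n n ℝ) c ≤ A := algebraMap_le_of_le_spectrum (by
    rw [hA.spectrum_real_eq_range_eigenvalues]; rintro _ ⟨i, rfl⟩; exact hc i) hA
  have := (Matrix.le_iff.mp hle).dotProduct_mulVec_nonneg x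
  simpa [sub_mulVec, algebraMap_eq_diagonal, Pi.algebraMap_def, dotProduct_sub] using this

lemma Matrix.trace_mul_transpose_self {m n : Type*} [Fintype m] [Fintype n]
    (B : Matrix m n ℝ) : (B * Bᵀ).trace = ∑ i, ∑ j, B i j ^ 2 := by
  simp [trace, mul_apply, sq]

section NormalizedOuter

variable {ι : Type*} [Fintype ι]

lemma sum_sq_eq_dotProduct_self (x : ι → ℝ) : ∑ i, x i ^ 2 = x ⬝ᵥ x := by
  simp [dotProduct, sq]

lemma sum_sq_mulVec_eq_dotProduct {κ : Type*} [Fintype κ] (S : Matrix κ ι ℝ) (x : ι → ℝ) :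
    ∑ i, (S *ᵥ x) i ^ 2 = x ⬝ᵥ (Sᵀ * S) *ᵥ x := by
  rw [sum_sq_eq_dotProduct_self, ← mulVec_mulVec, dotProduct_mulVec x, vecMul_transpose]

lemma sum_sq_pos {x : ι → ℝ} (hx : x ≠ 0) : 0 < ∑ j, x j ^ 2 := by
  obtain ⟨j, hj⟩ := Function.ne_iff.mp hx
  exact Finset.sum_pos' (fun j _ => sq_nonneg (x j)) ⟨j, Finset.mem_univ j, sq_pos_of_ne_zero hj⟩

/-- The entries of the orthogonal projection `x xᵀ / ‖x‖²` onto the line through `x`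
(all `0` at `x = 0`). -/
noncomputable def normalizedOuter (x : ι → ℝ) (i k : ι) : ℝ := x i * x k / ∑ j, x j ^ 2

lemma abs_normalizedOuter_le_one (x : ι → ℝ) (i k : ι) : |normalizedOuter x i k| ≤ 1 := by
  have hle (j : ι) : x j ^ 2 ≤ ∑ j, x j ^ 2 :=
    Finset.single_le_sum (fun j _ => sq_nonneg (x j)) (Finset.mem_univ j)
  have hamgm := two_mul_le_add_sq |x i| |x k|
  rw [sq_abs, sq_abs] at hamgm
  have hsum : 0 ≤ ∑ j, x j ^ 2 := Finset.sum_nonneg fun j _ => sq_nonneg (x j)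
  rw [normalizedOuter, abs_div, abs_mul, abs_of_nonneg hsum]
  exact div_le_one_of_le₀ (by linarith [hle i, hle k]) hsum

lemma measurable_normalizedOuter (i k : ι) :
    Measurable fun x : ι → ℝ => normalizedOuter x i k := by
  unfold normalizedOuter; fun_prop

lemma integrable_normalizedOuter (μ : Measure (ι → ℝ)) [IsFiniteMeasure μ] (i k : ι) :
    Integrable (fun x => normalizedOuter x i k) μ :=
  (integrable_const (1 : ℝ)).mono' (measurable_normalizedOuter i k).aestronglyMeasurable
    (.of_forall fun x => abs_normalizedOuter_le_one x i k)

lemma normalizedOuter_comp_equiv (x : ι → ℝ) (e : ι ≃ ι) (i k : ι) :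
    normalizedOuter (x ∘ e) i k = normalizedOuter x (e i) (e k) := by
  simp only [normalizedOuter, Function.comp_apply, e.sum_comp fun j => x j ^ 2]

lemma sum_normalizedOuter_self {x : ι → ℝ} (hx : x ≠ 0) : ∑ i, normalizedOuter x i i = 1 := by
  simp only [normalizedOuter, ← Finset.sum_div, ← sq, div_self (sum_sq_pos hx).ne']

end NormalizedOuter

section SymmetricProduct

variable {ι : Type*} [Fintype ι] (ν : Measure ℝ) [IsProbabilityMeasure ν]

lemma integral_normalizedOuter_self_eq (i k : ι) :
    ∫ x, normalizedOuter x i i ∂(Measure.pi fun _ => ν) =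
      ∫ x, normalizedOuter x k k ∂(Measure.pi fun _ => ν) := by
  classical
  rw [← (measurePreserving_piCongrLeft (fun _ : ι => ν) (Equiv.swap i k)).integral_comp']
  congr 1 with x
  have hswap : MeasurableEquiv.piCongrLeft (fun _ => ℝ) (Equiv.swap i k) x =
      x ∘ Equiv.swap i k := by
    ext j; simp [MeasurableEquiv.piCongrLeft, Equiv.piCongrLeft]
  rw [hswap, normalizedOuter_comp_equiv, Equiv.swap_apply_left]

lemma integral_normalizedOuter_of_ne [DecidableEq ι] [ν.IsNegInvariant] {i k : ι} (h : i ≠ k) :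
    ∫ x, normalizedOuter x i k ∂(Measure.pi fun _ => ν) = 0 := by
  set flip : ι → ℝ → ℝ := fun j => if j = i then Neg.neg else id
  have hflip : MeasurePreserving (fun (x : ι → ℝ) j => flip j (x j))
      (Measure.pi fun _ => ν) (Measure.pi fun _ => ν) :=
    measurePreserving_pi _ _ fun j => by
      by_cases hj : j = i
      · simpa [flip, hj] using Measure.measurePreserving_neg ν
      · simpa [flip, hj] using MeasurePreserving.id ν
  have hodd (x : ι → ℝ) :
      normalizedOuter (fun j => flip j (x j)) i k = -normalizedOuter x i k := by
    have hsq (j : ι) : flip j (x j) ^ 2 = x j ^ 2 := by by_cases hj : j = i <;> simp [flip, hj]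
    simp only [normalizedOuter, hsq, flip, if_pos rfl, if_neg h.symm, id]
    ring
  have := integral_map (μ := Measure.pi fun _ => ν) hflip.measurable.aemeasurable
    (measurable_normalizedOuter i k).aestronglyMeasurable
  simp only [hflip.map_eq, hodd, integral_neg] at this
  linarith

lemma integral_normalizedOuter_self [NullSingletonClass ν] (i : ι) :
    ∫ x, normalizedOuter x i i ∂(Measure.pi fun _ => ν) = (Fintype.card ι : ℝ)⁻¹ := by
  have : Nonempty ι := ⟨i⟩
  have htrace : ∑ k : ι, ∫ x, normalizedOuter x k k ∂(Measure.pi fun _ => ν) = 1 := by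
    rw [← integral_finsetSum _ fun k _ => integrable_normalizedOuter _ k k,
      integral_congr_ae ((Measure.ae_ne _ 0).mono fun x hx => sum_normalizedOuter_self hx)]
    simp
  rw [Finset.sum_congr rfl fun k _ => integral_normalizedOuter_self_eq ν k i, Finset.sum_const,
    Finset.card_univ, nsmul_eq_mul] at htrace
  exact eq_inv_of_mul_eq_one_right htrace

lemma integral_normalizedOuter_pi [DecidableEq ι] [ν.IsNegInvariant] [NullSingletonClass ν]
    (i k : ι) : ∫ x, normalizedOuter x i k ∂(Measure.pi fun _ => ν) =
      if i = k then (Fintype.card ι : ℝ)⁻¹ else 0 := by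
  split_ifs with h
  · exact h ▸ integral_normalizedOuter_self ν i
  · exact integral_normalizedOuter_of_ne ν h

end SymmetricProduct

instance gaussianReal_isNegInvariant (v : NNReal) : (gaussianReal 0 v).IsNegInvariant :=
  ⟨by simpa [Measure.neg] using gaussianReal_map_neg (μ := 0) (v := v)⟩

section NormalizedBilin

variable {m n : Type*} [Fintype m] [Fintype n]

noncomputable def normalizedBilinSq (B : Matrix m n ℝ) (x : m → ℝ) (y : n → ℝ) : ℝ :=
  (x ⬝ᵥ B *ᵥ y) ^ 2 / ((∑ i, x i ^ 2) * ∑ j, y j ^ 2)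

lemma normalizedBilinSq_nonneg (B : Matrix m n ℝ) (x : m → ℝ) (y : n → ℝ) :
    0 ≤ normalizedBilinSq B x y := by
  unfold normalizedBilinSq; positivity

lemma normalizedBilinSq_eq_sum (B : Matrix m n ℝ) (x : m → ℝ) (y : n → ℝ) :
    normalizedBilinSq B x y =
      ∑ i, ∑ j, ∑ k, ∑ l, B i j * B k l * (normalizedOuter x i k * normalizedOuter y j l) := by
  simp only [normalizedBilinSq, normalizedOuter]
  generalize ∑ i, x i ^ 2 = X
  generalize ∑ j, y j ^ 2 = Y
  simp only [dotProduct, mulVec, sq, Finset.mul_sum, Finset.sum_mul, Finset.sum_div]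
  refine Finset.sum_congr rfl fun i _ => Finset.sum_congr rfl fun j _ =>
    Finset.sum_congr rfl fun k _ => Finset.sum_congr rfl fun l _ => ?_
  ring

lemma normalizedBilinSq_mulVec_le {m' n' : Type*} [Fintype m'] [Fintype n'] (M : Matrix m n ℝ)
    {S : Matrix m m' ℝ} {T : Matrix n n' ℝ} {c d : ℝ} (hc : 0 < c) (hd : 0 < d)
    (hS : ∀ x, c * ∑ i, x i ^ 2 ≤ ∑ i, (S *ᵥ x) i ^ 2)
    (hT : ∀ y, d * ∑ j, y j ^ 2 ≤ ∑ j, (T *ᵥ y) j ^ 2) (x : m' → ℝ) (y : n' → ℝ) :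
    normalizedBilinSq M (S *ᵥ x) (T *ᵥ y) ≤ normalizedBilinSq (Sᵀ * M * T) x y / (c * d) := by
  rcases eq_or_ne x 0 with rfl | hx
  · simp [normalizedBilinSq]
  rcases eq_or_ne y 0 with rfl | hy
  · simp [normalizedBilinSq]
  have hdot : S *ᵥ x ⬝ᵥ M *ᵥ T *ᵥ y = x ⬝ᵥ (Sᵀ * M * T) *ᵥ y := by
    simp [dotProduct_mulVec, vecMul_vecMul, ← mulVec_mulVec, vecMul_transpose]
  have hx' := sum_sq_pos hx
  have hy' := sum_sq_pos hy
  rw [normalizedBilinSq, normalizedBilinSq, hdot, div_div]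
  refine div_le_div_of_nonneg_left (sq_nonneg _) (by positivity) ?_
  calc (∑ i, x i ^ 2) * (∑ j, y j ^ 2) * (c * d)
      = (c * ∑ i, x i ^ 2) * (d * ∑ j, y j ^ 2) := by ring
    _ ≤ _ := mul_le_mul (hS x) (hT y) (by positivity) (by positivity)

variable {μ : Measure (m → ℝ)} {ν : Measure (n → ℝ)} [IsFiniteMeasure μ] [IsFiniteMeasure ν]

lemma integrable_normalizedBilinSq (B : Matrix m n ℝ) :
    Integrable (fun p : (m → ℝ) × (n → ℝ) => normalizedBilinSq B p.1 p.2) (μ.prod ν) := by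
  simp only [normalizedBilinSq_eq_sum]
  refine integrable_finsetSum _ fun i _ => integrable_finsetSum _ fun j _ =>
    integrable_finsetSum _ fun k _ => integrable_finsetSum _ fun l _ => ?_
  exact ((integrable_normalizedOuter μ i k).mul_prod (integrable_normalizedOuter ν j l)).const_mul _

lemma integral_normalizedBilinSq (B : Matrix m n ℝ) [DecidableEq m] [DecidableEq n] {a b : ℝ}
    (hμ : ∀ i k, ∫ x, normalizedOuter x i k ∂μ = if i = k then a else 0)
    (hν : ∀ j l, ∫ y, normalizedOuter y j l ∂ν = if j = l then b else 0) :
    ∫ p : (m → ℝ) × (n → ℝ), normalizedBilinSq B p.1 p.2 ∂(μ.prod ν) =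
      a * b * ∑ i, ∑ j, B i j ^ 2 := by
  have hterm (i k : m) (j l : n) : Integrable (fun p : (m → ℝ) × (n → ℝ) =>
      B i j * B k l * (normalizedOuter p.1 i k * normalizedOuter p.2 j l)) (μ.prod ν) :=
    ((integrable_normalizedOuter μ i k).mul_prod (integrable_normalizedOuter ν j l)).const_mul _
  have hprod (i k : m) (j l : n) :
      ∫ p : (m → ℝ) × (n → ℝ), normalizedOuter p.1 i k * normalizedOuter p.2 j l ∂(μ.prod ν) =
        (∫ x, normalizedOuter x i k ∂μ) * ∫ y, normalizedOuter y j l ∂ν :=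
    integral_prod_mul (fun x => normalizedOuter x i k) (fun y => normalizedOuter y j l)
  simp only [normalizedBilinSq_eq_sum]
  simp (disch := intros; fun_prop) only [integral_finsetSum]
  simp only [integral_const_mul, hprod, hμ, hν, mul_ite, ite_mul, mul_zero, zero_mul,
    Finset.sum_ite_eq, Finset.mem_univ, if_true, Finset.mul_sum]
  exact Finset.sum_congr rfl fun i _ => Finset.sum_congr rfl fun j _ => by ring

end NormalizedBilin

theorem gaussian_bilinear_sign_moment_bound_general {N r : ℕ} (hN : 0 < N)
    (Γ : Matrix (Fin N) (Fin r) ℝ)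
    (Sig : Matrix (Fin N) (Fin N) ℝ)
    (hSig : Sig.PosDef)
    (S : Matrix (Fin N) (Fin N) ℝ) (hS : S.PosSemidef) (hSS : S * S = Sig)
    (lamMin : ℝ) (hlam : lamMin = ⨅ i, hSig.1.eigenvalues i) :
    (∫ g : (Fin N → ℝ) × (Fin N → ℝ),
        ((S.mulVec g.1) ⬝ᵥ ((Γ * Γᵀ).mulVec (S.mulVec g.2))) ^ 2 /
          ((∑ k, (S.mulVec g.1 k) ^ 2) * (∑ k, (S.mulVec g.2 k) ^ 2))
        ∂((Measure.pi fun _ : Fin N => gaussianReal 0 1).prod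
            (Measure.pi fun _ : Fin N => gaussianReal 0 1))) ≤
      (S * (Γ * Γᵀ) * Sig * (Γ * Γᵀ) * S).trace / (lamMin ^ 2 * (N : ℝ) ^ 2) := by
  have : NullSingletonClass (gaussianReal 0 1) := nullSingletonClass_gaussianReal one_ne_zero
  have : Nonempty (Fin N) := ⟨⟨0, hN⟩⟩
  have hSsymm : Sᵀ = S := hS.isHermitian
  have hlam_pos : 0 < lamMin := by
    obtain ⟨i, hi⟩ := exists_eq_ciInf_of_finite (f := hSig.1.eigenvalues)
    exact hlam ▸ hi ▸ hSig.eigenvalues_pos i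
  have hquad (x : Fin N → ℝ) : lamMin * ∑ i, x i ^ 2 ≤ ∑ i, (S *ᵥ x) i ^ 2 := by
    rw [sum_sq_mulVec_eq_dotProduct, hSsymm, hSS, sum_sq_eq_dotProduct_self]
    exact hSig.1.mul_dotProduct_self_le
      (fun i => hlam ▸ ciInf_le (Set.finite_range _).bddBelow i) x
  have htrace : (S * (Γ * Γᵀ) * Sig * (Γ * Γᵀ) * S).trace =
      ∑ i, ∑ j, (Sᵀ * (Γ * Γᵀ) * S) i j ^ 2 := by
    rw [← trace_mul_transpose_self, ← hSS]
    simp only [transpose_mul, transpose_transpose, hSsymm, Matrix.mul_assoc]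
  set μ := Measure.pi fun _ : Fin N => gaussianReal 0 1
  calc _ ≤ ∫ g : (Fin N → ℝ) × (Fin N → ℝ),
        normalizedBilinSq (Sᵀ * (Γ * Γᵀ) * S) g.1 g.2 / (lamMin * lamMin) ∂(μ.prod μ) :=
        integral_mono_of_nonneg (.of_forall fun g => normalizedBilinSq_nonneg _ _ _)
          ((integrable_normalizedBilinSq _).div_const _)
          (.of_forall fun g => normalizedBilinSq_mulVec_le _ hlam_pos hlam_pos hquad hquad g.1 g.2)
    _ = _ := by
      rw [integral_div, integral_normalizedBilinSq _ (integral_normalizedOuter_pi _)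
        (integral_normalizedOuter_pi _), htrace, Fintype.card_fin]
      field_simp

/-- For i.i.d. Gaussian vectors `Q_s, Q_t ∼ N(0, Σ)` with `Σ = ΓΓᵀ + AAᵀ` positive definite
(realized as `Q = Σ^{1/2} g` for independent standard Gaussians) and `M = ΓΓᵀ`,
`E[(Q_sᵀ M Q_t)² / (‖Q_s‖² ‖Q_t‖²)] ≤ tr(Σ^{1/2} M Σ M Σ^{1/2}) / (λ_min(Σ)² N²)`. -/
theorem gaussian_bilinear_sign_moment_bound {N r : ℕ} (hN : 0 < N)
    (Γ : Matrix (Fin N) (Fin r) ℝ) (A : Matrix (Fin N) (Fin N) ℝ)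
    (Sig : Matrix (Fin N) (Fin N) ℝ) (hSigdef : Sig = Γ * Γᵀ + A * Aᵀ)
    (hSig : Sig.PosDef)
    (S : Matrix (Fin N) (Fin N) ℝ) (hS : S.PosSemidef) (hSS : S * S = Sig)
    (lamMin : ℝ) (hlam : lamMin = ⨅ i, hSig.1.eigenvalues i) :
    (∫ g : (Fin N → ℝ) × (Fin N → ℝ),
        ((S.mulVec g.1) ⬝ᵥ ((Γ * Γᵀ).mulVec (S.mulVec g.2))) ^ 2 /
          ((∑ k, (S.mulVec g.1 k) ^ 2) * (∑ k, (S.mulVec g.2 k) ^ 2))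
        ∂((Measure.pi fun _ : Fin N => gaussianReal 0 1).prod
            (Measure.pi fun _ : Fin N => gaussianReal 0 1))) ≤
      (S * (Γ * Γᵀ) * Sig * (Γ * Γᵀ) * S).trace / (lamMin ^ 2 * (N : ℝ) ^ 2) :=
  gaussian_bilinear_sign_moment_bound_general hN Γ Sig hSig S hS hSS lamMin hlam
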